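/- Let R = k[x_1,…,x_d] over a field k of characteristic zero (or any field), m = (x_1,…,x_d), g an integer with 2 ≤ g ≤ d, and δ ≥ 2. Let J_1 = (x_1^δ,…,x_g^δ) + (x_1,…,x_{g-1})·(x_{g+1}^{δ-1},…,x_d^{δ-1}) and L_1 = (x_1,…,x_{g-1})·m^{δ-1} + (x_g^δ). Then the monomial x_1^{d(δ-2)+g}·x_1^{2d-g-1}·x_2^{δ-1}⋯x_g^{δ-1}·x_{g+1}^{δ-2}⋯x_d^{δ-2} lies in x_1^{d(δ-2)+g}·L_1^{d-1} but not in J_1^d. -/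

import Mathlib

/-!
Writing `M` for the monomial: since `g ≥ 2`, `x₁` lies in `(x₁,…,x_{g-1})`, so after splitting
off `x₁^{d(δ-2)+g}` the rest of `M` is a product of `d - 1` factors `x₁·x_i^{δ-1}` (`2 ≤ i ≤ g`)
and `x₁²·x_i^{δ-2}` (`i > g`), each in `(x₁,…,x_{g-1})·m^{δ-1}`; the powers of `x₁` match
exactly because `g ≤ d`.

Conversely, a monomial in `J₁^d` is divisible by a product of `d` monomial generators of `J₁`.
The only generator dividing `M` is `x₁^δ`: the others are too large in `x_i` for some `i ≥ 2`,
where `M` has exponent `δ - 1` or `δ - 2`. But `x₁^{dδ}` does not divide `M`.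
-/

open MvPolynomial

section

open Finset Pointwise

namespace MvPolynomial

variable {σ R : Type*} [CommSemiring R]

theorem prod_X_pow_eq_monomial_equivFunOnFinite [Fintype σ] (e : σ → ℕ) :
    ∏ i, (X i : MvPolynomial σ R) ^ e i = monomial (Finsupp.equivFunOnFinite.symm e) 1 := by
  rw [monomial_eq, C_1, one_mul, Finsupp.prod_fintype _ _ fun _ => pow_zero _]
  rfl

theorem exists_sum_le_of_monomial_mem_span_pow [Nontrivial R] {S : Set (σ →₀ ℕ)} {n : ℕ}
    {μ : σ →₀ ℕ} (h : monomial μ (1 : R) ∈ Ideal.span ((fun s => monomial s (1 : R)) '' S) ^ n) :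
    ∃ F : Fin n → σ →₀ ℕ, (∀ t, F t ∈ S) ∧ ∑ t, F t ≤ μ := by
  have hpow : ((fun s => monomial s (1 : R)) '' S) ^ n ⊆ (fun s => monomial s (1 : R)) ''
      {s | ∃ F : Fin n → σ →₀ ℕ, (∀ t, F t ∈ S) ∧ s = ∑ t, F t} := by
    intro x hx
    obtain ⟨f, rfl⟩ := Set.mem_pow.mp hx
    choose F hFS hF using fun t => (f t).2
    refine ⟨∑ t, F t, ⟨F, hFS, rfl⟩, ?_⟩
    simp only [monomial_sum_one, hF, List.prod_ofFn]
  rw [Submodule.span_pow] at h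
  obtain ⟨_, ⟨F, hFS, rfl⟩, hle⟩ := mem_ideal_span_monomial_image.mp (Ideal.span_mono hpow h) μ
    (by classical simp [coeff_monomial])
  exact ⟨F, hFS, hle⟩

theorem monomial_notMem_span_pow [Nontrivial R] {S : Set (σ →₀ ℕ)} {μ : σ →₀ ℕ} {n c : ℕ}
    (z : σ) (hS : ∀ s ∈ S, s ≤ μ → c ≤ s z) (hμ : μ z < n * c) :
    monomial μ (1 : R) ∉ Ideal.span ((fun s => monomial s (1 : R)) '' S) ^ n := by
  intro h
  obtain ⟨F, hFS, hle⟩ := exists_sum_le_of_monomial_mem_span_pow h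
  have hc (t : Fin n) : c ≤ F t z :=
    hS _ (hFS t) ((single_le_sum (fun _ _ => zero_le) (mem_univ t)).trans hle)
  have : n * c ≤ μ z := calc
    n * c = ∑ _t : Fin n, c := by simp
    _ ≤ ∑ t, F t z := sum_le_sum fun t _ => hc t
    _ = (∑ t, F t) z := (Finsupp.finsetSum_apply _ _ _).symm
    _ ≤ μ z := hle z
  omega

end MvPolynomial

theorem Finset.sum_range_ite_lt_one_two {a n : ℕ} (h : a ≤ n) :
    ∑ i ∈ range n, (if i < a then 1 else 2) = 2 * n - a := by
  obtain ⟨m, rfl⟩ := Nat.exists_eq_add_of_le h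
  rw [sum_range_add, sum_congr rfl fun i hi => if_pos (mem_range.mp hi),
    sum_congr rfl fun i _ => if_neg (by omega)]
  simp only [sum_const, card_range, smul_eq_mul]
  omega

variable {R : Type*} [CommSemiring R]

-- `X i` is the paper's `x_{i+1}`.
def witnessExponent (d g δ : ℕ) (i : Fin d) : ℕ :=
  if (i : ℕ) = 0 then d * δ - 1 else if (i : ℕ) < g then δ - 1 else δ - 2

theorem witnessExponent_succ {n g δ : ℕ} (i : Fin n) :
    witnessExponent (n + 1) g δ i.succ = if (i : ℕ) < g - 1 then δ - 1 else δ - 2 := by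
  simp [witnessExponent, Nat.lt_sub_iff_add_lt]

theorem prod_X_pow_witnessExponent_mem {n g δ : ℕ} (hg2 : 2 ≤ g) (hgn : g ≤ n + 1) (hδ : 2 ≤ δ) :
    ∏ i, (X i : MvPolynomial (Fin (n + 1)) R) ^ witnessExponent (n + 1) g δ i ∈
      Ideal.span {X 0 ^ ((n + 1) * (δ - 2) + g)} *
        (Ideal.span {p | ∃ i : Fin (n + 1), (i : ℕ) < g - 1 ∧ p = X i} *
          Ideal.span (Set.range X) ^ (δ - 1)) ^ n := by
  set B : Ideal (MvPolynomial (Fin (n + 1)) R) :=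
    Ideal.span {p | ∃ i : Fin (n + 1), (i : ℕ) < g - 1 ∧ p = X i}
  set 𝔪 : Ideal (MvPolynomial (Fin (n + 1)) R) := Ideal.span (Set.range X)
  have hX0 : X 0 ∈ B := Ideal.subset_span ⟨0, by simp only [Fin.val_zero]; omega, rfl⟩
  have hX (i : Fin (n + 1)) : X i ∈ 𝔪 := Ideal.subset_span ⟨i, rfl⟩
  let c (i : Fin n) : ℕ := if (i : ℕ) < g - 1 then 1 else 2
  have hfactor (i : Fin n) :
      X 0 ^ c i * X i.succ ^ witnessExponent (n + 1) g δ i.succ ∈ B * 𝔪 ^ (δ - 1) := by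
    rw [witnessExponent_succ]
    by_cases hi : (i : ℕ) < g - 1
    · simp only [c, hi, if_true, pow_one]
      exact Ideal.mul_mem_mul hX0 (Ideal.pow_mem_pow (hX _) _)
    · simp only [c, hi, if_false, pow_two, mul_assoc]
      rw [show δ - 1 = δ - 2 + 1 by omega, pow_succ']
      exact Ideal.mul_mem_mul hX0 (Ideal.mul_mem_mul (hX 0) (Ideal.pow_mem_pow (hX _) _))
  have hsplit : ∏ i, (X i : MvPolynomial (Fin (n + 1)) R) ^ witnessExponent (n + 1) g δ i =
      X 0 ^ ((n + 1) * (δ - 2) + g) *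
        ∏ i : Fin n, X 0 ^ c i * X i.succ ^ witnessExponent (n + 1) g δ i.succ := by
    rw [Fin.prod_univ_succ, prod_mul_distrib, prod_pow_eq_pow_sum, ← mul_assoc, ← pow_add]
    congr 2
    rw [Fin.sum_univ_eq_sum_range (fun i => if i < g - 1 then 1 else 2),
      sum_range_ite_lt_one_two (by omega)]
    simp only [witnessExponent, Fin.val_zero, ↓reduceIte]
    have : (n + 1) * (δ - 2) + (n + 1) * 2 = (n + 1) * δ := by
      rw [← mul_add, Nat.sub_add_cancel hδ]
    omega
  rw [hsplit]
  refine Ideal.mul_mem_mul (Ideal.mem_span_singleton_self _) ?_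
  simpa using Ideal.prod_mem_prod (s := univ) fun i _ => hfactor i

variable (R) in
noncomputable def J₁ (d g δ : ℕ) : Ideal (MvPolynomial (Fin d) R) :=
  Ideal.span {p | ∃ i : Fin d, (i : ℕ) < g ∧ p = X i ^ δ} +
    Ideal.span {p | ∃ i : Fin d, (i : ℕ) < g - 1 ∧ p = X i} *
      Ideal.span {p | ∃ j : Fin d, g ≤ (j : ℕ) ∧ p = X j ^ (δ - 1)}

def J₁Exponents (d g δ : ℕ) : Set (Fin d →₀ ℕ) :=
  {s | (∃ i : Fin d, (i : ℕ) < g ∧ s = Finsupp.single i δ) ∨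
    ∃ i j : Fin d, (i : ℕ) < g - 1 ∧ g ≤ (j : ℕ) ∧
      s = Finsupp.single i 1 + Finsupp.single j (δ - 1)}

theorem J₁_le_span_monomial {d g δ : ℕ} :
    J₁ R d g δ ≤ Ideal.span ((fun s => monomial s (1 : R)) '' J₁Exponents d g δ) := by
  rw [J₁, Submodule.add_eq_sup, Ideal.span_mul_span', sup_le_iff, Ideal.span_le, Ideal.span_le]
  constructor
  · rintro _ ⟨i, hi, rfl⟩
    exact Ideal.subset_span ⟨_, Or.inl ⟨i, hi, rfl⟩, (X_pow_eq_monomial).symm⟩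
  · rintro _ ⟨_, ⟨i, hi, rfl⟩, _, ⟨j, hj, rfl⟩, rfl⟩
    refine Ideal.subset_span ⟨_, Or.inr ⟨i, j, hi, hj, rfl⟩, ?_⟩
    rw [X_pow_eq_monomial, X]
    exact (monomial_mul.trans (congrArg _ (one_mul 1))).symm

theorem le_apply_zero_of_mem_J₁Exponents {n g δ : ℕ} (hg2 : 2 ≤ g) (hδ : 2 ≤ δ)
    {s : Fin (n + 1) →₀ ℕ} (hs : s ∈ J₁Exponents (n + 1) g δ)
    (hle : s ≤ Finsupp.equivFunOnFinite.symm (witnessExponent (n + 1) g δ)) : δ ≤ s 0 := by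
  rcases hs with ⟨i, hi, rfl⟩ | ⟨i, j, hi, hj, rfl⟩
  · obtain rfl | hi0 := eq_or_ne i 0
    · simp
    · have hδi : δ ≤ witnessExponent (n + 1) g δ i := by simpa using hle i
      rw [witnessExponent, if_neg (Fin.val_ne_zero_iff.mpr hi0), if_pos hi] at hδi
      omega
  · have hij : i ≠ j := by rintro rfl; omega
    have hδj : 0 + (δ - 1) ≤ witnessExponent (n + 1) g δ j := by
      simpa [Finsupp.single_eq_of_ne' hij] using hle j
    rw [witnessExponent, if_neg (by omega), if_neg (by omega)] at hδj
    omega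

theorem prod_X_pow_witnessExponent_notMem_J₁_pow [Nontrivial R] {n g δ : ℕ} (hg2 : 2 ≤ g)
    (hδ : 2 ≤ δ) :
    ∏ i, (X i : MvPolynomial (Fin (n + 1)) R) ^ witnessExponent (n + 1) g δ i ∉
      J₁ R (n + 1) g δ ^ (n + 1) := by
  rw [prod_X_pow_eq_monomial_equivFunOnFinite]
  intro h
  refine monomial_notMem_span_pow 0 (fun s hs => le_apply_zero_of_mem_J₁Exponents hg2 hδ hs) ?_
    (Ideal.pow_right_mono J₁_le_span_monomial _ h)
  show witnessExponent (n + 1) g δ 0 < (n + 1) * δ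
  simp only [witnessExponent, Fin.val_zero, ↓reduceIte]
  exact Nat.sub_lt (by positivity) one_pos

end

/-- With `J_1 = (x_1^δ,…,x_g^δ) + (x_1,…,x_{g-1})·(x_{g+1}^{δ-1},…,x_d^{δ-1})`
and `L_1 = (x_1,…,x_{g-1})·m^{δ-1} + (x_g^δ)`, the monomial
`x_1^{d(δ-2)+g}·x_1^{2d-g-1}·x_2^{δ-1}⋯x_g^{δ-1}·x_{g+1}^{δ-2}⋯x_d^{δ-2}
  = x_1^{dδ-1}·x_2^{δ-1}⋯x_g^{δ-1}·x_{g+1}^{δ-2}⋯x_d^{δ-2}`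
lies in `x_1^{d(δ-2)+g}·L_1^{d-1}` but not in `J_1^d`. -/
theorem stmt_17 {d : ℕ} {k : Type*} [Field k] (g δ : ℕ)
    (hg2 : 2 ≤ g) (hgd : g ≤ d) (hδ : 2 ≤ δ) :
    (∏ i : Fin d, (X i : MvPolynomial (Fin d) k) ^
        (if (i : ℕ) = 0 then d * δ - 1 else if (i : ℕ) < g then δ - 1 else δ - 2)) ∈
      Ideal.span {(X (⟨0, by omega⟩ : Fin d) : MvPolynomial (Fin d) k) ^ (d * (δ - 2) + g)} *
        (Ideal.span {p : MvPolynomial (Fin d) k | ∃ i : Fin d, (i : ℕ) < g - 1 ∧ p = X i} *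
            (Ideal.span (Set.range (X : Fin d → MvPolynomial (Fin d) k))) ^ (δ - 1) +
          Ideal.span {(X (⟨g - 1, by omega⟩ : Fin d) : MvPolynomial (Fin d) k) ^ δ}) ^ (d - 1) ∧
    (∏ i : Fin d, (X i : MvPolynomial (Fin d) k) ^
        (if (i : ℕ) = 0 then d * δ - 1 else if (i : ℕ) < g then δ - 1 else δ - 2)) ∉
      (Ideal.span {p : MvPolynomial (Fin d) k | ∃ i : Fin d, (i : ℕ) < g ∧ p = X i ^ δ} +
        Ideal.span {p : MvPolynomial (Fin d) k | ∃ i : Fin d, (i : ℕ) < g - 1 ∧ p = X i} *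
          Ideal.span {p : MvPolynomial (Fin d) k |
            ∃ j : Fin d, g ≤ (j : ℕ) ∧ p = X j ^ (δ - 1)}) ^ d := by
  obtain ⟨n, rfl⟩ : ∃ n, d = n + 1 := ⟨d - 1, by omega⟩
  exact ⟨Ideal.mul_mono_right (Ideal.pow_right_mono le_sup_left n)
      (prod_X_pow_witnessExponent_mem hg2 hgd hδ),
    prod_X_pow_witnessExponent_notMem_J₁_pow hg2 hδ⟩
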